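/- In a multipartite tournament with no 1-Duke, every m-Duke is an (m+1)-King, i.e., it has a directed path of length at most m+1 to every other vertex, including those in its own partite set. -/

import Mathlib

/-- An orientation of a complete multipartite graph: vertices `V`, partite sets
given as fibers of `part : V → ι`, and `peck` the arc relation. Between any two
vertices in different partite sets there is exactly one arc, and there are no
arcs within a partite set. -/
structure MTour (V : Type*) (ι : Type*) where
  part : V → ι
  peck : V → V → Prop
  complete : ∀ u v, part u ≠ part v → peck u v ∨ peck v u
  inter : ∀ u v, peck u v → part u ≠ part v
  asymm : ∀ u v, peck u v → ¬ peck v u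

namespace MTour

variable {V ι : Type*}

/-- There is a directed path of length at most `m` from `d` to `c`. -/
def hasPath (T : MTour V ι) (m : ℕ) (d c : V) : Prop :=
  ∃ k ≤ m, ∃ f : ℕ → V, f 0 = d ∧ f k = c ∧ ∀ i < k, T.peck (f i) (f (i + 1))

/-- `d` is an `m`-Duke: every vertex in a different partite set is reachable
from `d` by a directed path of length at most `m`. -/
def isDuke (T : MTour V ι) (m : ℕ) (d : V) : Prop :=
  ∀ c, T.part c ≠ T.part d → T.hasPath m d c

/-- `d` is an `m`-King: every other vertex is reachable from `d` by a directed
path of length at most `m`. -/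
def isKing (T : MTour V ι) (m : ℕ) (d : V) : Prop :=
  ∀ c, c ≠ d → T.hasPath m d c

/-- The out-degree of a vertex. -/
noncomputable def outDeg (T : MTour V ι) (v : V) : ℕ :=
  Nat.card {w // T.peck v w}

/-- `e` eclipses `d`: same partite set, `e` pecks everything `d` pecks, and
at least one vertex `d` does not peck. -/
def eclipses (T : MTour V ι) (e d : V) : Prop :=
  T.part e = T.part d ∧ (∀ c, T.peck d c → T.peck e c) ∧ ∃ c, T.peck e c ∧ ¬ T.peck d c

/-- `d` is non-eclipsed: no vertex of its partite set eclipses it. -/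
def nonEclipsed (T : MTour V ι) (d : V) : Prop :=
  ∀ e, ¬ T.eclipses e d

/-- Partite set `i` dominates partite set `j`: some vertex of `i` pecks all of `j`. -/
def Dominates (T : MTour V ι) (i j : ι) : Prop :=
  ∃ v, T.part v = i ∧ ∀ w, T.part w = j → T.peck v w

end MTour

/-!
A vertex `c` in the partite set of an `m`-Duke `d` is not a 1-Duke, so some vertex `b` outside
that partite set pecks `c`. Since `d` reaches `b` within `m` steps, it reaches `c` within `m + 1`.
Vertices outside the partite set of `d` are reached within `m` steps already.
-/

namespace MTour

variable {V ι : Type*} {T : MTour V ι} {m n : ℕ} {b c d : V}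

theorem hasPath_refl (T : MTour V ι) (m : ℕ) (d : V) : T.hasPath m d d :=
  ⟨0, m.zero_le, fun _ => d, rfl, rfl, fun _ h => absurd h (Nat.not_lt_zero _)⟩

theorem hasPath.mono (h : T.hasPath m d c) (hmn : m ≤ n) : T.hasPath n d c :=
  let ⟨k, hk, f, h0, hk', hf⟩ := h
  ⟨k, hk.trans hmn, f, h0, hk', hf⟩

theorem hasPath.snoc (h : T.hasPath m d b) (hbc : T.peck b c) : T.hasPath (m + 1) d c := by
  obtain ⟨k, hk, f, h0, hkb, hf⟩ := h
  refine ⟨k + 1, by omega, fun i => if i ≤ k then f i else c, by simp [h0], by simp,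
    fun i hi => ?_⟩
  rcases Nat.lt_or_ge i k with h | h
  · simpa [h.le, Nat.succ_le_of_lt h] using hf i h
  · obtain rfl : i = k := by omega
    simpa [hkb] using hbc

theorem hasPath_one_of_peck (h : T.peck d c) : T.hasPath 1 d c :=
  (T.hasPath_refl 0 d).snoc h

theorem exists_peck_of_not_isDuke_one (h : ¬ T.isDuke 1 c) :
    ∃ b, T.part b ≠ T.part c ∧ T.peck b c := by
  simp only [isDuke, not_forall] at h
  obtain ⟨b, hb, hcb⟩ := h
  exact ⟨b, hb, (T.complete b c hb).resolve_right (mt hasPath_one_of_peck hcb)⟩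

end MTour

theorem stmt12_general {V ι : Type*} (T : MTour V ι)
    (hno1 : ¬ ∃ v, T.isDuke 1 v) (m : ℕ) (d : V) (hd : T.isDuke m d) :
    T.isKing (m + 1) d := by
  intro c _
  by_cases hcd : T.part c = T.part d
  · obtain ⟨b, hb, hbc⟩ := MTour.exists_peck_of_not_isDuke_one fun h => hno1 ⟨c, h⟩
    exact (hd b (hcd ▸ hb)).snoc hbc
  · exact (hd c hcd).mono m.le_succ

/-- In a multipartite tournament with no 1-Duke, every `m`-Duke is an
`(m+1)`-King. -/
theorem stmt12 {V ι : Type*} [Finite V] (T : MTour V ι)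
    (hno1 : ¬ ∃ v, T.isDuke 1 v) (m : ℕ) (d : V) (hd : T.isDuke m d) :
    T.isKing (m + 1) d :=
  stmt12_general T hno1 m d hd
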